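/- Every ring of finite weak dimension is left GF-closed; that is, if R is a ring with wdim(R) ≤ n for some nonnegative integer n, then for every short exact sequence of left R-modules 0 → A → B → C → 0 with A and C Gorenstein flat, B is Gorenstein flat. -/

import Mathlib

open TensorProduct
universe u
section RTensor
variable (R : Type u) [Ring R]
def trel (A : Type u) [AddCommGroup A] [Module Rᵐᵒᵖ A]
    (B : Type u) [AddCommGroup B] [Module R B] : Submodule ℤ (TensorProduct ℤ A B) :=
  Submodule.span ℤ { z | ∃ (r : R) (a : A) (b : B),
    z = (MulOpposite.op r • a) ⊗ₜ[ℤ] b - a ⊗ₜ[ℤ] (r • b) }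
def RTensor (A : Type u) [AddCommGroup A] [Module Rᵐᵒᵖ A]
    (B : Type u) [AddCommGroup B] [Module R B] : Type u :=
  TensorProduct ℤ A B ⧸ trel R A B
noncomputable instance (A : Type u) [AddCommGroup A] [Module Rᵐᵒᵖ A]
    (B : Type u) [AddCommGroup B] [Module R B] : AddCommGroup (RTensor R A B) := by
  unfold RTensor; infer_instance
noncomputable instance (A : Type u) [AddCommGroup A] [Module Rᵐᵒᵖ A]
    (B : Type u) [AddCommGroup B] [Module R B] : Module ℤ (RTensor R A B) := by
  unfold RTensor; infer_instance
variable {A A' : Type u} [AddCommGroup A] [Module Rᵐᵒᵖ A] [AddCommGroup A'] [Module Rᵐᵒᵖ A']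
variable {B B' : Type u} [AddCommGroup B] [Module R B] [AddCommGroup B'] [Module R B']
noncomputable def RTensor.map (A : Type u) [AddCommGroup A] [Module Rᵐᵒᵖ A]
    (f : B →ₗ[R] B') : RTensor R A B →ₗ[ℤ] RTensor R A B' :=
  Submodule.mapQ (trel R A B) (trel R A B')
    (TensorProduct.map LinearMap.id f.toAddMonoidHom.toIntLinearMap)
    (by
      rw [trel, Submodule.span_le]
      rintro z ⟨r, a, b, rfl⟩
      simp only [SetLike.mem_coe, Submodule.mem_comap, map_sub, TensorProduct.map_tmul,
        LinearMap.id_coe, id_eq, AddMonoidHom.coe_toIntLinearMap, LinearMap.toAddMonoidHom_coe,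
        LinearMap.map_smul]
      exact Submodule.subset_span ⟨r, a, f b, by erw [map_sub, TensorProduct.map_tmul, TensorProduct.map_tmul]; simp⟩)
noncomputable def RTensor.lmap (g : A →ₗ[Rᵐᵒᵖ] A')
    (B : Type u) [AddCommGroup B] [Module R B] : RTensor R A B →ₗ[ℤ] RTensor R A' B :=
  Submodule.mapQ (trel R A B) (trel R A' B)
    (TensorProduct.map g.toAddMonoidHom.toIntLinearMap LinearMap.id)
    (by
      rw [trel, Submodule.span_le]
      rintro z ⟨r, a, b, rfl⟩
      simp only [SetLike.mem_coe, Submodule.mem_comap, map_sub, TensorProduct.map_tmul,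
        LinearMap.id_coe, id_eq, AddMonoidHom.coe_toIntLinearMap, LinearMap.toAddMonoidHom_coe,
        LinearMap.map_smul]
      exact Submodule.subset_span ⟨r, g a, b, by erw [map_sub, TensorProduct.map_tmul, TensorProduct.map_tmul]; simp⟩)
end RTensor

/-- A left `R`-module `B` is flat if tensoring with it preserves injectivity
of maps of right `R`-modules. -/
def FlatModule (R : Type u) [Ring R] (B : Type u) [AddCommGroup B] [Module R B] : Prop :=
  ∀ (A A' : Type u) [AddCommGroup A] [Module Rᵐᵒᵖ A] [AddCommGroup A'] [Module Rᵐᵒᵖ A']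
    (g : A →ₗ[Rᵐᵒᵖ] A'), Function.Injective g → Function.Injective (RTensor.lmap R g B)

/-- A witness that `M` is a Gorenstein flat left `R`-module: a doubly infinite exact
sequence of flat left `R`-modules `⋯ → F (-1) → F 0 → F 1 → ⋯` with
`M ≅ Im (F 0 → F 1)`, which stays exact after applying `I ⊗_R −` for every
injective right `R`-module `I`. -/
structure GorensteinFlatWitness (R : Type u) [Ring R]
    (M : Type u) [AddCommGroup M] [Module R M] where
  F : ℤ → Type u
  [acg : ∀ i, AddCommGroup (F i)]
  [mod : ∀ i, Module R (F i)]
  d : ∀ i, F i →ₗ[R] F (i + 1)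
  flat : ∀ i, FlatModule R (F i)
  exact : ∀ i, Function.Exact (d i) (d (i + 1))
  iso : M ≃ₗ[R] LinearMap.range (d 0)
  tensorExact : ∀ (I : Type u) [AddCommGroup I] [Module Rᵐᵒᵖ I], Module.Injective Rᵐᵒᵖ I →
    ∀ i, Function.Exact (RTensor.map R I (d i)) (RTensor.map R I (d (i + 1)))

/-- A left `R`-module is Gorenstein flat if it admits a Gorenstein flat witness. -/
def IsGorensteinFlat (R : Type u) [Ring R]
    (M : Type u) [AddCommGroup M] [Module R M] : Prop :=
  Nonempty (GorensteinFlatWitness R M)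

/-- `0 → A → B → C → 0` is a short exact sequence. -/
def IsShortExact {R : Type u} [Ring R] {A B C : Type u}
    [AddCommGroup A] [Module R A] [AddCommGroup B] [Module R B] [AddCommGroup C] [Module R C]
    (f : A →ₗ[R] B) (g : B →ₗ[R] C) : Prop :=
  Function.Injective f ∧ Function.Exact f g ∧ Function.Surjective g

/-- A ring `R` is left GF-closed if the class of Gorenstein flat left `R`-modules is
closed under extensions. -/
def LeftGFClosed (R : Type u) [Ring R] : Prop :=
  ∀ (A B C : Type u) [AddCommGroup A] [Module R A] [AddCommGroup B] [Module R B]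
    [AddCommGroup C] [Module R C] (f : A →ₗ[R] B) (g : B →ₗ[R] C),
    IsShortExact f g → IsGorensteinFlat R A → IsGorensteinFlat R C → IsGorensteinFlat R B

/-- An exact sequence `0 → G n → G (n-1) → ⋯ → G 0 → M → 0` of left `R`-modules,
encoded as an `ℕ`-indexed exact complex, vanishing in degrees `> n`, that augments to `M`. -/
structure ModResolution (R : Type u) [Ring R] (M : Type u) [AddCommGroup M] [Module R M]
    (n : ℕ) where
  G : ℕ → Type u
  [acg : ∀ i, AddCommGroup (G i)]
  [mod : ∀ i, Module R (G i)]
  d : ∀ i, G (i + 1) →ₗ[R] G i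
  aug : G 0 →ₗ[R] M
  surj : Function.Surjective aug
  exact0 : Function.Exact (d 0) aug
  exact : ∀ i, Function.Exact (d (i + 1)) (d i)
  zero : ∀ i > n, ∀ x : G i, x = 0

attribute [instance] ModResolution.acg ModResolution.mod

/-- `M` has Gorenstein flat dimension at most `n`: there is an exact sequence
`0 → G n → ⋯ → G 0 → M → 0` with every `G i` Gorenstein flat. -/
def GfdLE (R : Type u) [Ring R] (M : Type u) [AddCommGroup M] [Module R M] (n : ℕ) : Prop :=
  ∃ res : ModResolution R M n, ∀ i ≤ n, IsGorensteinFlat R (res.G i)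

/-- The Gorenstein flat dimension of `M`, in `ℕ∞`: the least length of a resolution of `M`
by Gorenstein flat modules, or `⊤` if there is none. -/
noncomputable def Gfd (R : Type u) [Ring R] (M : Type u) [AddCommGroup M] [Module R M] : ℕ∞ :=
  sInf {c : ℕ∞ | ∃ n : ℕ, c = n ∧ GfdLE R M n}

/-- `M` has flat dimension at most `n`: there is an exact sequence
`0 → G n → ⋯ → G 0 → M → 0` with every `G i` flat. -/
def FdLE (R : Type u) [Ring R] (M : Type u) [AddCommGroup M] [Module R M] (n : ℕ) : Prop :=
  ∃ res : ModResolution R M n, ∀ i ≤ n, FlatModule R (res.G i)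

/-- `wdim R ≤ n`: every (left or right) `R`-module has flat dimension at most `n`. -/
def WdimLE (R : Type u) [Ring R] (n : ℕ) : Prop :=
  (∀ (M : Type u) [AddCommGroup M] [Module R M], FdLE R M n) ∧
  (∀ (M : Type u) [AddCommGroup M] [Module Rᵐᵒᵖ M], FdLE Rᵐᵒᵖ M n)

/-!
Flatness is tested on character modules: `M` is flat iff `M⁺ = Hom_ℤ(M, ℚ/ℤ)` is an injective
right module. Write a Gorenstein flat `M` as `K₀` in a complete flat resolution `F`, with
`Kᵢ = im dⁱ`. Dualizing `0 → Kᵢ → Fⁱ⁺¹ → Kᵢ₊₁ → 0` gives `0 → Kᵢ₊₁⁺ → (Fⁱ⁺¹)⁺ → Kᵢ⁺ → 0` with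
injective middle term, so passing from `Kᵢ₊₁⁺` to `Kᵢ⁺` lowers the injective dimension by one.
If every module has flat dimension `≤ n`, then `Kₙ⁺` has injective dimension `≤ n`, hence
`M⁺ ≅ K₀⁺` is injective and `M` is flat. So over such a ring Gorenstein flat means flat, and
flat modules are closed under extensions because injective modules are.
-/

open CategoryTheory

namespace RTensor

variable {R : Type u} [Ring R] {A : Type u} [AddCommGroup A] [Module Rᵐᵒᵖ A]
  {B B' : Type u} [AddCommGroup B] [Module R B] [AddCommGroup B'] [Module R B']

variable (R) in
noncomputable def tmul (a : A) (b : B) : RTensor R A B :=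
  Submodule.Quotient.mk (a ⊗ₜ[ℤ] b)

@[elab_as_elim]
lemma induction_on {P : RTensor R A B → Prop} (x : RTensor R A B)
    (tmul : ∀ a b, P (tmul R a b)) (add : ∀ x y, P x → P y → P (x + y)) : P x := by
  obtain ⟨y, rfl⟩ := Submodule.Quotient.mk_surjective _ x
  induction y using TensorProduct.induction_on with
  | zero => simpa [RTensor.tmul] using tmul 0 0
  | tmul a b => exact tmul a b
  | add y z hy hz => exact add _ _ hy hz

lemma add_tmul (a a' : A) (b : B) : tmul R (a + a') b = tmul R a b + tmul R a' b := by
  rw [tmul, TensorProduct.add_tmul]; rfl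

lemma tmul_add (a : A) (b b' : B) : tmul R a (b + b') = tmul R a b + tmul R a b' := by
  rw [tmul, TensorProduct.tmul_add]; rfl

lemma op_smul_tmul (r : R) (a : A) (b : B) :
    tmul R (MulOpposite.op r • a) b = tmul R a (r • b) :=
  (Submodule.Quotient.eq _).mpr (Submodule.subset_span ⟨r, a, b, rfl⟩)

@[simp]
lemma map_tmul (f : B →ₗ[R] B') (a : A) (b : B) :
    RTensor.map R A f (tmul R a b) = tmul R a (f b) := rfl

lemma linearMap_ext {M : Type*} [AddCommGroup M] [Module ℤ M]
    {φ ψ : RTensor R A B →ₗ[ℤ] M} (h : ∀ a b, φ (tmul R a b) = ψ (tmul R a b)) : φ = ψ :=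
  LinearMap.ext fun x => x.induction_on h fun x y hx hy => by rw [map_add, map_add, hx, hy]

@[simp]
protected lemma map_id : RTensor.map R A (LinearMap.id : B →ₗ[R] B) = LinearMap.id :=
  linearMap_ext fun _ _ => rfl

@[simp]
protected lemma map_zero : RTensor.map R A (0 : B →ₗ[R] B') = 0 :=
  linearMap_ext fun a _ => by
    rw [map_tmul, LinearMap.zero_apply, tmul, TensorProduct.tmul_zero]; rfl

end RTensor

namespace CharacterModule

variable {R : Type u} [Ring R] {B B' : Type u} [AddCommGroup B] [Module R B]
  [AddCommGroup B'] [Module R B']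

noncomputable instance instModuleMulOpposite : Module Rᵐᵒᵖ (CharacterModule B) :=
  inferInstanceAs (Module Rᵈᵐᵃ (B →+ AddCircle (1 : ℚ)))

lemma op_smul_apply (r : R) (c : CharacterModule B) (b : B) :
    (MulOpposite.op r • c) b = c (r • b) := rfl

lemma add_apply (c c' : CharacterModule B) (b : B) : (c + c') b = c b + c' b := rfl

lemma zsmul_apply (n : ℤ) (c : CharacterModule B) (b : B) : (n • c) b = n • c b :=
  AddMonoidHom.zsmul_apply _ _ _

end CharacterModule

namespace RTensor

variable {R : Type u} [Ring R] {A A' : Type u} [AddCommGroup A] [Module Rᵐᵒᵖ A]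
  [AddCommGroup A'] [Module Rᵐᵒᵖ A'] {B : Type u} [AddCommGroup B] [Module R B]

noncomputable def liftChar (ψ : A →ₗ[Rᵐᵒᵖ] CharacterModule B) :
    CharacterModule (RTensor R A B) :=
  (Submodule.liftQ (trel R A B)
    (TensorProduct.lift (LinearMap.mk₂ ℤ (fun a b => ψ a b)
      (fun a a' b => by rw [map_add, CharacterModule.add_apply])
      (fun c a b => by rw [map_zsmul, CharacterModule.zsmul_apply])
      (fun a b b' => map_add _ _ _) (fun c a b => map_zsmul _ _ _)))
    (by
      rw [trel, Submodule.span_le]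
      rintro _ ⟨r, a, b, rfl⟩
      show TensorProduct.lift _ ((MulOpposite.op r • a) ⊗ₜ[ℤ] b - a ⊗ₜ[ℤ] (r • b)) = 0
      rw [map_sub, TensorProduct.lift.tmul, TensorProduct.lift.tmul, LinearMap.mk₂_apply,
        LinearMap.mk₂_apply, ψ.map_smul, CharacterModule.op_smul_apply, sub_self])).toAddMonoidHom

noncomputable def curryChar (χ : CharacterModule (RTensor R A B)) :
    A →ₗ[Rᵐᵒᵖ] CharacterModule B where
  toFun a := AddMonoidHom.mk' (fun b => χ (tmul R a b)) fun b b' => by rw [tmul_add, map_add]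
  map_add' a a' := by ext b; exact (congrArg χ (add_tmul a a' b)).trans (map_add χ _ _)
  map_smul' r a := by ext b; exact congrArg χ (op_smul_tmul r.unop a b)

lemma characterModule_ext {φ ψ : CharacterModule (RTensor R A B)}
    (h : ∀ a b, φ (tmul R a b) = ψ (tmul R a b)) : φ = ψ :=
  DFunLike.ext _ _ fun x => x.induction_on h fun x y hx hy => by rw [map_add, map_add, hx, hy]

@[simp]
lemma liftChar_curryChar (χ : CharacterModule (RTensor R A B)) : liftChar (curryChar χ) = χ :=
  characterModule_ext fun _ _ => rfl

lemma liftChar_lmap (ψ : A' →ₗ[Rᵐᵒᵖ] CharacterModule B) (g : A →ₗ[Rᵐᵒᵖ] A')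
    (x : RTensor R A B) : liftChar ψ (RTensor.lmap R g B x) = liftChar (ψ ∘ₗ g) x :=
  x.induction_on (fun _ _ => rfl) fun x y hx hy => by rw [map_add, map_add, map_add, hx, hy]

end RTensor

section Lambek

variable {R : Type u} [Ring R] {B : Type u} [AddCommGroup B] [Module R B]

open RTensor in
lemma FlatModule.of_injective_characterModule
    (h : Module.Injective Rᵐᵒᵖ (CharacterModule B)) : FlatModule R B := by
  intro A A' _ _ _ _ g hg
  rw [injective_iff_map_eq_zero]
  intro x hx
  refine CharacterModule.eq_zero_of_character_apply fun χ => ?_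
  obtain ⟨ψ, hψ⟩ := h.out g hg (curryChar χ)
  calc χ x = liftChar (ψ ∘ₗ g) x := by rw [LinearMap.ext (f := ψ ∘ₗ g) hψ, liftChar_curryChar]
    _ = 0 := by rw [← liftChar_lmap, hx, map_zero]

open RTensor in
lemma FlatModule.injective_characterModule (h : FlatModule R B) :
    Module.Injective Rᵐᵒᵖ (CharacterModule B) := by
  refine ⟨fun U V _ _ _ _ j hj φ => ?_⟩
  obtain ⟨χ, hχ⟩ := CharacterModule.dual_surjective_of_injective (R := ℤ)
    (RTensor.lmap R j B) (h U V j hj) (liftChar φ)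
  refine ⟨curryChar χ, fun u => ?_⟩
  ext b
  exact DFunLike.congr_fun hχ (tmul R u b)

lemma flatModule_iff_injective_characterModule :
    FlatModule R B ↔ Module.Injective Rᵐᵒᵖ (CharacterModule B) :=
  ⟨FlatModule.injective_characterModule, FlatModule.of_injective_characterModule⟩

end Lambek

namespace CharacterModule

variable {R : Type u} [Ring R] {A B C : Type u} [AddCommGroup A] [Module R A]
  [AddCommGroup B] [Module R B] [AddCommGroup C] [Module R C]

noncomputable def opDual (f : A →ₗ[R] B) : CharacterModule B →ₗ[Rᵐᵒᵖ] CharacterModule A where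
  toFun c := c.comp f.toAddMonoidHom
  map_add' _ _ := rfl
  map_smul' r c := by ext a; exact congrArg c (f.map_smul r.unop a).symm

@[simp]
lemma opDual_apply (f : A →ₗ[R] B) (c : CharacterModule B) (a : A) : opDual f c a = c (f a) := rfl

noncomputable def opDualEquiv (e : A ≃ₗ[R] B) : CharacterModule B ≃ₗ[Rᵐᵒᵖ] CharacterModule A :=
  LinearEquiv.ofLinearMap (opDual e.toLinearMap) (opDual e.symm.toLinearMap)
    (by ext c a; simp) (by ext c b; simp)

lemma opDual_injective {f : A →ₗ[R] B} (hf : Function.Surjective f) :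
    Function.Injective (opDual f) :=
  dual_injective_of_surjective (R := ℤ) f.toAddMonoidHom.toIntLinearMap hf

lemma opDual_surjective {f : A →ₗ[R] B} (hf : Function.Injective f) :
    Function.Surjective (opDual f) :=
  dual_surjective_of_injective (R := ℤ) f.toAddMonoidHom.toIntLinearMap hf

lemma exact_opDual {f : A →ₗ[R] B} {g : B →ₗ[R] C} (hfg : Function.Exact f g)
    (hg : Function.Surjective g) : Function.Exact (opDual g) (opDual f) := by
  intro c
  refine ⟨fun hc => ?_, ?_⟩
  · have hker : g.toAddMonoidHom.ker ≤ c.ker := fun b hb => by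
      obtain ⟨a, rfl⟩ := (hfg b).mp hb
      exact DFunLike.congr_fun hc a
    exact ⟨g.toAddMonoidHom.liftOfSurjective hg ⟨c, hker⟩,
      DFunLike.ext _ _ (g.toAddMonoidHom.liftOfRightInverse_comp_apply _
        (Function.rightInverse_surjInv hg) ⟨c, hker⟩)⟩
  · rintro ⟨c, rfl⟩
    ext a
    rw [opDual_apply, opDual_apply, hfg.apply_apply_eq_zero, map_zero]; rfl

end CharacterModule

section ShortExact

variable {S : Type u} [Ring S] {X Y Z : Type u} [AddCommGroup X] [Module S X]
  [AddCommGroup Y] [Module S Y] [AddCommGroup Z] [Module S Z] {f : X →ₗ[S] Y} {g : Y →ₗ[S] Z}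

lemma IsShortExact.shortExact (h : IsShortExact f g) :
    (ModuleCat.shortComplexOfCompEqZero f g h.2.1.linearMap_comp_eq_zero).ShortExact :=
  ModuleCat.shortComplex_shortExact _ h.2.1 h.1 h.2.2

lemma Function.Exact.isShortExact_subtype_range (h : Function.Exact f g)
    (hg : Function.Surjective g) : IsShortExact (LinearMap.range f).subtype g :=
  ⟨Submodule.injective_subtype _, fun y => by simpa using h y, hg⟩

lemma Function.Exact.rangeRestrict (h : Function.Exact f g) : Function.Exact f g.rangeRestrict :=
  fun y => by rw [← h y]; exact Submodule.coe_eq_zero.symm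

end ShortExact

lemma IsShortExact.opDual {R : Type u} [Ring R] {A B C : Type u} [AddCommGroup A] [Module R A]
    [AddCommGroup B] [Module R B] [AddCommGroup C] [Module R C] {f : A →ₗ[R] B}
    {g : B →ₗ[R] C} (h : IsShortExact f g) :
    IsShortExact (CharacterModule.opDual g) (CharacterModule.opDual f) :=
  ⟨CharacterModule.opDual_injective h.2.2, CharacterModule.exact_opDual h.2.1 h.2.2,
    CharacterModule.opDual_surjective h.1⟩

section FlatDimension

variable {R : Type u} [Ring R] {A B C : Type u} [AddCommGroup A] [Module R A]
  [AddCommGroup B] [Module R B] [AddCommGroup C] [Module R C]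

lemma flatModule_iff_hasInjectiveDimensionLT_one :
    FlatModule R B ↔ HasInjectiveDimensionLT (ModuleCat.of Rᵐᵒᵖ (CharacterModule B)) 1 := by
  rw [flatModule_iff_injective_characterModule, Module.injective_iff_injective_object,
    injective_iff_hasInjectiveDimensionLT_one]

lemma FlatModule.of_linearEquiv (e : B ≃ₗ[R] C) (h : FlatModule R B) : FlatModule R C := by
  rw [flatModule_iff_hasInjectiveDimensionLT_one] at h ⊢
  exact hasInjectiveDimensionLT_of_iso (CharacterModule.opDualEquiv e).symm.toModuleIso 1

lemma FlatModule.of_isShortExact {f : A →ₗ[R] B} {g : B →ₗ[R] C} (h : IsShortExact f g)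
    (hA : FlatModule R A) (hC : FlatModule R C) : FlatModule R B := by
  rw [flatModule_iff_hasInjectiveDimensionLT_one] at hA hC ⊢
  exact h.opDual.shortExact.hasInjectiveDimensionLT_X₂ 1 hC hA

namespace ModResolution

variable {N : Type u} [AddCommGroup N] [Module R N] {n : ℕ}

lemma isShortExact (res : ModResolution R N n) :
    IsShortExact (LinearMap.range (res.d 0)).subtype res.aug :=
  res.exact0.isShortExact_subtype_range res.surj

lemma aug_bijective (res : ModResolution R N 0) : Function.Bijective res.aug := by
  refine ⟨(injective_iff_map_eq_zero _).mpr fun x hx => ?_, res.surj⟩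
  obtain ⟨y, rfl⟩ := (res.exact0 x).mp hx
  rw [res.zero 1 one_pos y, map_zero]

def truncate (res : ModResolution R N (n + 1)) : ModResolution R (LinearMap.range (res.d 0)) n where
  G i := res.G (i + 1)
  d i := res.d (i + 1)
  aug := (res.d 0).rangeRestrict
  surj := LinearMap.surjective_rangeRestrict _
  exact0 := (res.exact 0).rangeRestrict
  exact i := res.exact (i + 1)
  zero i hi := res.zero (i + 1) (by omega)

end ModResolution

lemma hasInjectiveDimensionLT_characterModule_of_fdLE : ∀ (k : ℕ) (N : Type u)
    [AddCommGroup N] [Module R N], FdLE R N k →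
      HasInjectiveDimensionLT (ModuleCat.of Rᵐᵒᵖ (CharacterModule N)) (k + 1)
  | 0, _, _, _, ⟨res, hres⟩ => flatModule_iff_hasInjectiveDimensionLT_one.mp <|
      (hres 0 le_rfl).of_linearEquiv (LinearEquiv.ofBijective res.aug res.aug_bijective)
  | k + 1, _, _, _, ⟨res, hres⟩ => by
      have hG : HasInjectiveDimensionLT (ModuleCat.of Rᵐᵒᵖ (CharacterModule (res.G 0))) 1 :=
        flatModule_iff_hasInjectiveDimensionLT_one.mp (hres 0 (Nat.zero_le _))
      exact res.isShortExact.opDual.shortExact.hasInjectiveDimensionLT_X₁ (k + 1)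
        (hasInjectiveDimensionLT_characterModule_of_fdLE k _
          ⟨res.truncate, fun i hi => hres (i + 1) (by omega)⟩)
        (hasInjectiveDimensionLT_of_ge _ 1 (k + 2) (by omega))

end FlatDimension

attribute [local instance] GorensteinFlatWitness.acg GorensteinFlatWitness.mod

namespace GorensteinFlatWitness

variable {R : Type u} [Ring R] {M : Type u} [AddCommGroup M] [Module R M]
  (W : GorensteinFlatWitness R M)

lemma isShortExact_range (i : ℤ) :
    IsShortExact (LinearMap.range (W.d i)).subtype (W.d (i + 1)).rangeRestrict :=
  (W.exact i).rangeRestrict.isShortExact_subtype_range (LinearMap.surjective_rangeRestrict _)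

lemma hasInjectiveDimensionLT_characterModule_range {i : ℤ} {m : ℕ}
    (h : HasInjectiveDimensionLT
      (ModuleCat.of Rᵐᵒᵖ (CharacterModule (LinearMap.range (W.d (i + 1))))) (m + 2)) :
    HasInjectiveDimensionLT
      (ModuleCat.of Rᵐᵒᵖ (CharacterModule (LinearMap.range (W.d i)))) (m + 1) :=
  have hF := flatModule_iff_hasInjectiveDimensionLT_one.mp (W.flat (i + 1))
  (W.isShortExact_range i).opDual.shortExact.hasInjectiveDimensionLT_X₃ (m + 1)
    (hasInjectiveDimensionLT_of_ge _ 1 (m + 1) (by omega)) h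

lemma flatModule_range : ∀ (k : ℕ) (i : ℤ), HasInjectiveDimensionLT
      (ModuleCat.of Rᵐᵒᵖ (CharacterModule (LinearMap.range (W.d (i + k))))) (k + 1) →
    FlatModule R (LinearMap.range (W.d i))
  | 0, i, h =>
    flatModule_iff_hasInjectiveDimensionLT_one.mpr (by rwa [Nat.cast_zero, add_zero] at h)
  | k + 1, i, h => flatModule_range k i <| W.hasInjectiveDimensionLT_characterModule_range
      (by rwa [Nat.cast_succ, ← add_assoc] at h)

lemma flatModule_of_fdLE {n : ℕ} (h : FdLE R (LinearMap.range (W.d n)) n) : FlatModule R M :=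
  have hK := hasInjectiveDimensionLT_characterModule_of_fdLE n _ h
  (W.flatModule_range n 0 (by rw [zero_add]; exact hK)).of_linearEquiv W.iso.symm

end GorensteinFlatWitness

section Gorenstein

variable {R : Type u} [Ring R] {M : Type u} [AddCommGroup M] [Module R M]

lemma IsGorensteinFlat.flatModule {n : ℕ}
    (hfd : ∀ (N : Type u) [AddCommGroup N] [Module R N], FdLE R N n)
    (hM : IsGorensteinFlat R M) : FlatModule R M :=
  let ⟨W⟩ := hM
  W.flatModule_of_fdLE (hfd _)

def evenId (S : Type*) [Semiring S] (X : Type*) [AddCommMonoid X] [Module S X] (i : ℤ) :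
    X →ₗ[S] X :=
  if Even i then LinearMap.id else 0

lemma exact_evenId {S X : Type*} [Ring S] [AddCommGroup X] [Module S X] (i : ℤ) :
    Function.Exact (evenId S X i) (evenId S X (i + 1)) := by
  by_cases hi : Even i
  · have hi' : ¬Even (i + 1) := fun h => Int.even_add_one.mp h hi
    simp only [evenId, hi, hi', if_true, if_false]
    exact (LinearMap.exact_zero_iff_surjective _ _).mpr Function.surjective_id
  · simp only [evenId, hi, Int.even_add_one.mpr hi, if_true, if_false]
    exact (LinearMap.exact_zero_iff_injective _ _).mpr Function.injective_id

lemma RTensor.map_evenId {I : Type u} [AddCommGroup I] [Module Rᵐᵒᵖ I] (i : ℤ) :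
    RTensor.map R I (evenId R M i) = evenId ℤ (RTensor R I M) i := by
  by_cases hi : Even i <;> simp [evenId, hi]

lemma FlatModule.isGorensteinFlat (hM : FlatModule R M) : IsGorensteinFlat R M :=
  ⟨{ F := fun _ => M
     d := evenId R M
     flat := fun _ => hM
     exact := exact_evenId
     iso := LinearEquiv.ofInjective _ (by simpa [evenId] using Function.injective_id)
     tensorExact := fun I _ _ _ i => by
       rw [RTensor.map_evenId, RTensor.map_evenId]
       exact exact_evenId i }⟩

end Gorenstein

/-- Every ring of finite weak dimension is left GF-closed. -/
theorem leftGFClosed_of_wdim_le (R : Type u) [Ring R] (n : ℕ) (hw : WdimLE R n)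
    (A B C : Type u) [AddCommGroup A] [Module R A] [AddCommGroup B] [Module R B]
    [AddCommGroup C] [Module R C] (f : A →ₗ[R] B) (g : B →ₗ[R] C)
    (h : IsShortExact f g) (hA : IsGorensteinFlat R A) (hC : IsGorensteinFlat R C) :
    IsGorensteinFlat R B :=
  (FlatModule.of_isShortExact h (hA.flatModule hw.1) (hC.flatModule hw.1)).isGorensteinFlat
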